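/- Let σ > 0, Δ ∈ ℝ, μ = N(Δ, σ²) and ν = N(0, σ²) one-dimensional Gaussian measures. Then the privacy loss random variable L(x) = log((dμ/dν)(x)) satisfies L(x) = (Δ/σ²)·x − Δ²/(2σ²) ν-almost everywhere, and the pushforward of μ under L is the Gaussian measure N(Δ²/(2σ²), Δ²/σ²) on ℝ. -/

import Mathlib

open MeasureTheory ProbabilityTheory Real

/-!
The densities of `N(m₁, v)` and `N(m₂, v)` have the same normalising constant, so their ratio is
the exponential of an affine function of `x`; hence the privacy loss is that affine function
almost everywhere, and an affine image of a Gaussian is Gaussian.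
-/

namespace ProbabilityTheory

variable {m₁ m₂ : ℝ} {v : NNReal}

lemma gaussianPDFReal_div_gaussianPDFReal (hv : v ≠ 0) (x : ℝ) :
    gaussianPDFReal m₁ v x / gaussianPDFReal m₂ v x
      = rexp ((m₁ - m₂) / v * x - (m₁ ^ 2 - m₂ ^ 2) / (2 * v)) := by
  have hv' : (0 : ℝ) < v := by positivity
  rw [gaussianPDFReal, gaussianPDFReal, mul_div_mul_left _ _ (by positivity), ← Real.exp_sub]
  congr 1
  field_simp
  ring

lemma gaussianReal_eq_withDensity_gaussianReal (hv : v ≠ 0) :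
    gaussianReal m₁ v = (gaussianReal m₂ v).withDensity
      fun x ↦ ENNReal.ofReal (rexp ((m₁ - m₂) / v * x - (m₁ ^ 2 - m₂ ^ 2) / (2 * v))) := by
  rw [gaussianReal_of_var_ne_zero _ hv, gaussianReal_of_var_ne_zero _ hv,
    ← withDensity_mul _ (measurable_gaussianPDF _ _) (by fun_prop)]
  congr 1
  funext x
  rw [Pi.mul_apply, gaussianPDF, gaussianPDF,
    ← ENNReal.ofReal_mul (gaussianPDFReal_nonneg _ _ _), ← gaussianPDFReal_div_gaussianPDFReal hv,
    mul_div_cancel₀ _ (gaussianPDFReal_pos _ _ _ hv).ne']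

lemma rnDeriv_gaussianReal_gaussianReal (hv : v ≠ 0) :
    (gaussianReal m₁ v).rnDeriv (gaussianReal m₂ v) =ᵐ[gaussianReal m₂ v]
      fun x ↦ ENNReal.ofReal (rexp ((m₁ - m₂) / v * x - (m₁ ^ 2 - m₂ ^ 2) / (2 * v))) := by
  conv_lhs => rw [gaussianReal_eq_withDensity_gaussianReal (m₂ := m₂) hv]
  exact Measure.rnDeriv_withDensity _ (by fun_prop)

lemma log_rnDeriv_gaussianReal_gaussianReal (hv : v ≠ 0) :
    (fun x ↦ log ((gaussianReal m₁ v).rnDeriv (gaussianReal m₂ v) x).toReal)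
      =ᵐ[gaussianReal m₂ v] fun x ↦ (m₁ - m₂) / v * x - (m₁ ^ 2 - m₂ ^ 2) / (2 * v) := by
  filter_upwards [rnDeriv_gaussianReal_gaussianReal hv] with x hx
  rw [hx, ENNReal.toReal_ofReal (exp_nonneg _), log_exp]

lemma gaussianReal_absolutelyContinuous_gaussianReal (hv : v ≠ 0) :
    gaussianReal m₁ v ≪ gaussianReal m₂ v :=
  (gaussianReal_absolutelyContinuous m₁ hv).trans (gaussianReal_absolutelyContinuous' m₂ hv)

lemma gaussianReal_map_affine (a b : ℝ) :
    (gaussianReal m₁ v).map (fun x ↦ a * x + b)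
      = gaussianReal (a * m₁ + b) (.mk (a ^ 2) (sq_nonneg a) * v) := by
  rw [← gaussianReal_map_add_const, ← gaussianReal_map_const_mul,
    Measure.map_map (measurable_add_const b) (measurable_const_mul a)]
  rfl

end ProbabilityTheory

/-- **The Gaussian privacy loss random variable is Gaussian.**
For `σ > 0`, `Δ ∈ ℝ`, `μ = N(Δ, σ²)` and `ν = N(0, σ²)`, the privacy loss
`L x = log ((dμ/dν) x)` equals `(Δ/σ²) x - Δ²/(2σ²)` `ν`-almost everywhere, and the
pushforward of `μ` under `L` is the Gaussian measure `N(Δ²/(2σ²), Δ²/σ²)`. -/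
theorem gaussian_privacy_loss_distribution (σ : NNReal) (hσ : 0 < σ) (Δ : ℝ) :
    (∀ᵐ x ∂(gaussianReal 0 (σ ^ 2)),
        Real.log (((gaussianReal Δ (σ ^ 2)).rnDeriv (gaussianReal 0 (σ ^ 2)) x).toReal) =
          (Δ / (σ : ℝ) ^ 2) * x - Δ ^ 2 / (2 * (σ : ℝ) ^ 2)) ∧
      (gaussianReal Δ (σ ^ 2)).map
          (fun x =>
            Real.log (((gaussianReal Δ (σ ^ 2)).rnDeriv (gaussianReal 0 (σ ^ 2)) x).toReal)) =
        gaussianReal (Δ ^ 2 / (2 * (σ : ℝ) ^ 2)) (Real.toNNReal (Δ ^ 2 / (σ : ℝ) ^ 2)) := by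
  have hv : σ ^ 2 ≠ 0 := by positivity
  have hloss := log_rnDeriv_gaussianReal_gaussianReal (m₁ := Δ) (m₂ := 0) hv
  simp only [sub_zero, NNReal.coe_pow, ne_eq, OfNat.ofNat_ne_zero, not_false_eq_true,
    zero_pow] at hloss
  refine ⟨hloss, ?_⟩
  rw [Measure.map_congr ((gaussianReal_absolutelyContinuous_gaussianReal hv).ae_eq hloss)]
  simp_rw [sub_eq_add_neg]
  rw [gaussianReal_map_affine]
  congr 1
  · field_simp
    ring
  · ext
    rw [Real.coe_toNNReal _ (by positivity), NNReal.coe_mul, NNReal.coe_mk, NNReal.coe_pow]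
    field_simp
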